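/- Let A ∈ ℝ^{m×n}, let Θ ∈ ℝ^{n×n} be diagonal with strictly positive diagonal entries, let N ⊆ {1,…,n} be a subset of column indices with complement B, let A_N (resp. A_B) be the submatrix of A formed by the columns in N (resp. B) and Θ_N, Θ_B the corresponding principal submatrices of Θ. Let δ_d > 0, S = A_N Θ_N A_Nᵀ, R = off(S), and K = AΘAᵀ + δ_d I_m (which is symmetric positive definite). Then every eigenvalue of the symmetric matrix K^{-1/2} R K^{-1/2} is strictly less than 1. -/

import Mathlib

open Matrix

/-- off(B): same off-diagonal entries as B, zero diagonal. -/
def offDiag {ι : Type*} [DecidableEq ι] (B : Matrix ι ι ℝ) : Matrix ι ι ℝ :=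
  B - Matrix.diagonal (fun i => B i i)

/-- The positive semidefinite square root of a positive semidefinite matrix, as defined by
`Matrix.PosSemidef.sqrt` in the older Mathlib (since removed). -/
noncomputable def posSemidefSqrt {n : Type*} [Fintype n] [DecidableEq n] {A : Matrix n n ℝ}
    (hA : A.PosSemidef) : Matrix n n ℝ :=
  hA.1.eigenvectorUnitary.1 * Matrix.diagonal ((↑) ∘ (√·) ∘ hA.1.eigenvalues) *
  (star hA.1.eigenvectorUnitary : Matrix n n ℝ)

/-!
Write `Q = K^{1/2}`. Since `1 - Q⁻¹ R Q⁻¹ = Q⁻¹ (K - R) Q⁻¹`, it suffices that `K - R` is positive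
definite. Splitting `AΘAᵀ = S + A_B Θ_B A_Bᵀ` gives `K - R = A_B Θ_B A_Bᵀ + diag(S) + δ_d I`, and the
diagonal of the positive semidefinite matrix `S` is nonnegative.
-/

section

variable {ι : Type*} [Fintype ι] [DecidableEq ι]

theorem posSemidefSqrt_eq_cfc {K : Matrix ι ι ℝ} (hK : K.PosSemidef) :
    posSemidefSqrt hK = cfc Real.sqrt K := by
  rw [hK.1.cfc_eq]
  rfl

theorem posSemidefSqrt_mul_self {K : Matrix ι ι ℝ} (hK : K.PosSemidef) :
    posSemidefSqrt hK * posSemidefSqrt hK = K := by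
  have hspec : ∀ t ∈ spectrum ℝ K, 0 ≤ t := fun t ht => by
    obtain ⟨i, rfl⟩ := hK.1.spectrum_real_eq_range_eigenvalues ▸ ht
    exact hK.eigenvalues_nonneg i
  rw [posSemidefSqrt_eq_cfc, ← cfc_mul _ _ K]
  conv_rhs => rw [← cfc_id ℝ K hK.1.isSelfAdjoint]
  exact cfc_congr fun t ht => Real.mul_self_sqrt (hspec t ht)

theorem isHermitian_posSemidefSqrt {K : Matrix ι ι ℝ} (hK : K.PosSemidef) :
    (posSemidefSqrt hK).IsHermitian := by
  rw [posSemidefSqrt_eq_cfc]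
  exact cfc_predicate _ _

theorem lt_one_of_mulVec_eq_smul_of_posDef_sub {Q M : Matrix ι ι ℝ} (hQ : Q.IsHermitian)
    (hQu : IsUnit Q) (hQM : (Q * Q - M).PosDef)
    {μ : ℝ} {x : ι → ℝ} (hx : x ≠ 0) (hμ : (Q⁻¹ * M * Q⁻¹) *ᵥ x = μ • x) : μ < 1 := by
  have hdet : IsUnit Q.det := (isUnit_iff_isUnit_det Q).1 hQu
  have hpd : (1 - Q⁻¹ * M * Q⁻¹).PosDef := by
    have := hQM.conjTranspose_mul_mul_same (B := Q⁻¹)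
      (mulVec_injective_of_isUnit (isUnit_nonsing_inv_iff.2 hQu))
    rwa [conjTranspose_nonsing_inv, hQ.eq, mul_sub, sub_mul, ← mul_assoc, nonsing_inv_mul _ hdet,
      one_mul, mul_nonsing_inv _ hdet] at this
  have hpos := hpd.dotProduct_mulVec_pos hx
  rw [sub_mulVec, one_mulVec, hμ, dotProduct_sub, dotProduct_smul, smul_eq_mul, sub_pos] at hpos
  exact lt_of_mul_lt_mul_right (by rwa [one_mul]) (dotProduct_star_self_nonneg x)

end

theorem Matrix.PosSemidef.posDef_add_smul_one_sub_offDiag {ι : Type*} [DecidableEq ι]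
    {S T : Matrix ι ι ℝ} (hS : S.PosSemidef) (hTS : (T - S).PosSemidef) {δ : ℝ} (hδ : 0 < δ) :
    (T + δ • 1 - offDiag S).PosDef := by
  have hdiag : (diagonal fun i => S i i).PosSemidef :=
    posSemidef_diagonal_iff.2 fun _ => hS.diag_nonneg
  rw [show T + δ • 1 - offDiag S = T - S + diagonal (fun i => S i i) + δ • 1 by
    unfold offDiag; abel]
  exact PosDef.posSemidef_add (hTS.add hdiag) (PosDef.one.smul hδ)

theorem submatrix_mul_diagonal_mul_transpose {R m n : Type*} [CommSemiring R] [Fintype n]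
    [DecidableEq n] (A : Matrix m n R) (d : n → R) (N : Finset n) :
    A.submatrix id (fun j : {j // j ∈ N} => (j : n)) * diagonal (fun j : {j // j ∈ N} => d j) *
      (A.submatrix id (fun j : {j // j ∈ N} => (j : n)))ᵀ =
      A * diagonal (fun j => if j ∈ N then d j else 0) * Aᵀ := by
  ext i k
  rw [mul_apply, mul_apply]
  simp only [mul_diagonal, transpose_apply, submatrix_apply, id, mul_ite, ite_mul, mul_zero,
    zero_mul]
  rw [Finset.sum_ite_mem, Finset.univ_inter, ← Finset.sum_coe_sort N]

theorem posSemidef_mul_diagonal_mul_transpose {m n : Type*} [Fintype m] [Fintype n]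
    [DecidableEq n] (A : Matrix m n ℝ) {d : n → ℝ} (hd : ∀ j, 0 ≤ d j) :
    (A * diagonal d * Aᵀ).PosSemidef := by
  simpa using (posSemidef_diagonal_iff.2 hd).mul_mul_conjTranspose_same A

theorem stmt_3 {m n : ℕ} (A : Matrix (Fin m) (Fin n) ℝ)
    (d : Fin n → ℝ) (hd : ∀ j, 0 < d j)
    (N : Finset (Fin n))
    (AN : Matrix (Fin m) {j // j ∈ N} ℝ)
    (hAN : AN = A.submatrix id (fun j : {j // j ∈ N} => (j : Fin n)))
    (ThetaN : Matrix {j // j ∈ N} {j // j ∈ N} ℝ)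
    (hThetaN : ThetaN = Matrix.diagonal (fun j : {j // j ∈ N} => d j))
    (δd : ℝ) (hδd : 0 < δd)
    (S R K : Matrix (Fin m) (Fin m) ℝ)
    (hS : S = AN * ThetaN * ANᵀ)
    (hR : R = offDiag S)
    (hK : K = A * Matrix.diagonal d * Aᵀ + δd • (1 : Matrix (Fin m) (Fin m) ℝ))
    (hKpd : K.PosDef) :
    ∀ μ : ℝ, ∀ x : Fin m → ℝ, x ≠ 0 →
      ((posSemidefSqrt hKpd.posSemidef)⁻¹ * R * (posSemidefSqrt hKpd.posSemidef)⁻¹).mulVec x = μ • x →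
      μ < 1 := by
  intro μ x hx hμ
  have hQQ := posSemidefSqrt_mul_self hKpd.posSemidef
  refine lt_one_of_mulVec_eq_smul_of_posDef_sub (isHermitian_posSemidefSqrt _)
    (isUnit_of_mul_isUnit_left (hQQ ▸ hKpd.isUnit)) ?_ hx hμ
  have hSN : S = A * diagonal (fun j => if j ∈ N then d j else 0) * Aᵀ := by
    rw [hS, hAN, hThetaN, submatrix_mul_diagonal_mul_transpose]
  rw [hQQ, hK, hR]
  refine PosSemidef.posDef_add_smul_one_sub_offDiag ?_ ?_ hδd
  · rw [hSN]
    exact posSemidef_mul_diagonal_mul_transpose A fun j => by split_ifs <;> simp [(hd j).le]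
  · rw [hSN, ← Matrix.sub_mul, ← Matrix.mul_sub, diagonal_sub]
    exact posSemidef_mul_diagonal_mul_transpose A fun j => by split_ifs <;> simp [(hd j).le]
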